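/- In the affine root system of type A_n^{(1)} with n ≥ 2, indexing the simple roots by ℤ/(n+1)ℤ arranged in a cycle, the set of quantum roots is exactly the set of roots of the form α_{k̄} + α_{k+1 bar} + ⋯ + α_{m̄} (a sum of simple roots over a proper 'arc' of consecutive vertices of the cycle). Equivalently, the quantum roots are exactly the positive real roots all of whose simple-root coefficients lie in {0,1}. -/

import Mathlib

structure KMD (I : Type) [Fintype I] [DecidableEq I] where
  A : I → I → ℤ
  A_diag : ∀ i, A i i = 2
  A_offdiag : ∀ i j, i ≠ j → A i j ≤ 0
  A_symm_zero : ∀ i j, A i j = 0 → A j i = 0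
  X : Type
  Y : Type
  [addX : AddCommGroup X]
  [addY : AddCommGroup Y]
  P : Y →ₗ[ℤ] X →ₗ[ℤ] ℤ
  α : I → X
  αv : I → Y
  indep_α : LinearIndependent ℤ α
  indep_αv : LinearIndependent ℤ αv
  pair_simple : ∀ i j, P (αv i) (α j) = A i j

attribute [instance] KMD.addX KMD.addY

namespace KMD

open scoped Classical

variable {I : Type} [Fintype I] [DecidableEq I] (S : KMD I)

/-- The simple reflection on `X`, as a linear map. -/
def preReflX (i : I) : S.X →ₗ[ℤ] S.X :=
  LinearMap.id - (S.P (S.αv i)).smulRight (S.α i)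

lemma preReflX_apply (i : I) (x : S.X) :
    S.preReflX i x = x - S.P (S.αv i) x • S.α i := by
  simp [preReflX]

lemma preReflX_invol (i : I) : Function.Involutive (S.preReflX i) := by
  intro x
  have h2 : S.P (S.αv i) (S.α i) = 2 := by rw [S.pair_simple i i, S.A_diag i]
  have hp : S.P (S.αv i) (x - S.P (S.αv i) x • S.α i) = -(S.P (S.αv i) x) := by
    rw [map_sub, LinearMap.map_smul, h2, smul_eq_mul]; ring
  simp only [S.preReflX_apply, hp]
  module

/-- The simple reflection `r_i` acting on `X`. -/
def reflX (i : I) : S.X ≃ₗ[ℤ] S.X :=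
  { S.preReflX i with
    invFun := S.preReflX i
    left_inv := S.preReflX_invol i
    right_inv := S.preReflX_invol i }

def preReflY (i : I) : S.Y →ₗ[ℤ] S.Y :=
  LinearMap.id - (S.P.flip (S.α i)).smulRight (S.αv i)

lemma preReflY_apply (i : I) (y : S.Y) :
    S.preReflY i y = y - S.P y (S.α i) • S.αv i := by
  simp [preReflY]

lemma preReflY_invol (i : I) : Function.Involutive (S.preReflY i) := by
  intro y
  have h2 : S.P (S.αv i) (S.α i) = 2 := by rw [S.pair_simple i i, S.A_diag i]
  have hp : S.P (y - S.P y (S.α i) • S.αv i) (S.α i) = -(S.P y (S.α i)) := by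
    rw [map_sub, LinearMap.map_smul, LinearMap.sub_apply, LinearMap.smul_apply, h2,
      smul_eq_mul]; ring
  simp only [S.preReflY_apply, hp]
  module

/-- The simple reflection `r_i` acting contragrediently on `Y`. -/
def reflY (i : I) : S.Y ≃ₗ[ℤ] S.Y :=
  { S.preReflY i with
    invFun := S.preReflY i
    left_inv := S.preReflY_invol i
    right_inv := S.preReflY_invol i }

/-- The product `r_{i_1} ⋯ r_{i_k}` of simple reflections on `X` indexed by a word. -/
def wordX (l : List I) : S.X ≃ₗ[ℤ] S.X := (l.map S.reflX).prod

def wordY (l : List I) : S.Y ≃ₗ[ℤ] S.Y := (l.map S.reflY).prod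

/-- Real roots: the Weyl-group orbit of the simple roots. -/
def IsRoot (x : S.X) : Prop := ∃ p : List I × I, x = S.wordX p.1 (S.α p.2)

def IsPosRoot (x : S.X) : Prop :=
  S.IsRoot x ∧ ∃ c : I → ℕ, x = ∑ i, (c i : ℤ) • S.α i

def IsNegRoot (x : S.X) : Prop :=
  S.IsRoot x ∧ ∃ c : I → ℕ, x = -∑ i, (c i : ℤ) • S.α i

/-- The coroot `β∨` associated to a real root `β`. -/
noncomputable def coroot (x : S.X) : S.Y :=
  if h : S.IsRoot x then S.wordY h.choose.1 (S.αv h.choose.2) else 0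

/-- The reflection `s_β` associated to a real root `β`, acting on `X`. -/
noncomputable def sReflX (x : S.X) : S.X ≃ₗ[ℤ] S.X :=
  if h : S.IsRoot x then S.wordX h.choose.1 * S.reflX h.choose.2 * (S.wordX h.choose.1)⁻¹
  else 1

/-- The reflection `s_β` acting on `Y`. -/
noncomputable def sReflY (x : S.X) : S.Y ≃ₗ[ℤ] S.Y :=
  if h : S.IsRoot x then S.wordY h.choose.1 * S.reflY h.choose.2 * (S.wordY h.choose.1)⁻¹
  else 1

/-- The inversion set `Inv(w) = {γ ∈ Φ₊ | w γ ∈ Φ₋}`. -/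
def InvSet (w : S.X ≃ₗ[ℤ] S.X) : Set S.X := {γ | S.IsPosRoot γ ∧ S.IsNegRoot (w γ)}

/-- Height of an element of the coroot lattice. -/
noncomputable def htv (y : S.Y) : ℤ :=
  if h : ∃ c : I → ℤ, y = ∑ i, c i • S.αv i then ∑ i, h.choose i else 0

/-- Coordinates of an element of the coroot lattice in the basis of simple coroots. -/
noncomputable def coeffY (y : S.Y) : I → ℤ :=
  if h : ∃ c : I → ℤ, y = ∑ i, c i • S.αv i then h.choose else 0

/-- A quantum root: a positive real root `β` with `⟨β∨, γ⟩ = 1` for every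
`γ ∈ Inv(s_β) \ {β}`. -/
def IsQuantum (β : S.X) : Prop :=
  S.IsPosRoot β ∧ ∀ γ ∈ S.InvSet (S.sReflX β), γ ≠ β → S.P (S.coroot β) γ = 1

/-- Word length with respect to the simple reflections. -/
noncomputable def len (w : S.X ≃ₗ[ℤ] S.X) : ℕ :=
  sInf {n | ∃ l : List I, l.length =  n ∧ w = S.wordX l}

/-- The Dynkin diagram of the generalized Cartan matrix, as a simple graph. -/
def dynkinGraph : SimpleGraph I where
  Adj i j := i ≠ j ∧ S.A i j ≠ 0
  symm := by
    constructor
    rintro i j ⟨hne, hz⟩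
    exact ⟨hne.symm, fun h0 => hz (S.A_symm_zero j i h0)⟩
  loopless := by
    constructor
    rintro i ⟨hne, -⟩
    exact hne rfl

/-- The support `I₁(β)` of a root `β`. -/
noncomputable def suppRoot (β : S.X) : Set I := {i | 1 ≤ S.coeffY (S.coroot β) i}

end KMD
/-!
Write `δ = ∑ α_i` and `(c, d) = cᵀ A d` for the invariant form on root-lattice coordinates, so
that `⟨β∨, γ⟩ = (β, γ)` for real roots. On the cycle `(c, c) = ∑ (c_i - c_{i+1})²`: the form is
positive semidefinite with radical `ℤ δ`, and since `(β, β) = 2` the coefficients of a real root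
differ by at most one.

If a positive real root `β` has a coefficient `≥ 2`, all its coefficients are `≥ 1`, and
`γ = β - δ` is a positive real root (`δ - α_i` is the root of the arc of the other `n` vertices,
and the Weyl group fixes `δ`) with `⟨β∨, γ⟩ = 2` and `s_β γ = -(β + δ)`; so `β` is not quantum.

Conversely, let `β` have coefficients in `{0, 1}` and `γ ∈ Inv(s_β) \ {β}`. Then
`p = ⟨β∨, γ⟩ ≥ 1` because `s_β γ = γ - p β` is negative, and `0 ≤ (β - γ, β - γ) = 4 - 2p`.
If `p = 2`, then `β - γ` is isotropic, hence a multiple of `δ`; at a vertex outside the support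
of `β` we get `γ ≤ p β = 0`, so the multiple is zero and `γ = β`.
-/

open Finset

lemma abs_sub_le_sum_Ico_sq (f : ℕ → ℤ) {m k : ℕ} (hmk : m ≤ k) :
    |f m - f k| ≤ ∑ s ∈ Ico m k, (f s - f (s + 1)) ^ 2 := by
  calc |f m - f k| = |∑ s ∈ Ico m k, (f s - f (s + 1))| := by
        rw [abs_sub_comm, ← Finset.sum_Ico_sub f hmk, ← abs_neg, ← Finset.sum_neg_distrib]
        simp only [neg_sub]
    _ ≤ ∑ s ∈ Ico m k, |f s - f (s + 1)| := Finset.abs_sum_le_sum_abs _ _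
    _ ≤ ∑ s ∈ Ico m k, (f s - f (s + 1)) ^ 2 := by
        gcongr with s
        rw [Int.abs_eq_natAbs]
        exact Int.natAbs_le_self_sq _

lemma ZMod.sum_range_add {M : Type*} [AddCommMonoid M] {n : ℕ} (g : ZMod (n + 1) → M)
    (j : ZMod (n + 1)) : ∑ s ∈ range (n + 1), g (j + s) = ∑ k, g k := by
  rw [← Fin.sum_univ_eq_sum_range (fun s => g (j + s))]
  exact Fintype.sum_equiv (Equiv.addLeft j) _ _ fun k =>
    congrArg (fun x => g (j + x)) (ZMod.natCast_zmod_val k)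

lemma ZMod.two_mul_abs_sub_le_sum_sq {n : ℕ} (c : ZMod (n + 1) → ℤ) (i j : ZMod (n + 1)) :
    2 * |c i - c j| ≤ ∑ k, (c k - c (k + 1)) ^ 2 := by
  set f : ℕ → ℤ := fun s => c (j + s)
  set v := (i - j).val
  have hv : v ≤ n + 1 := (ZMod.val_lt _).le
  have hf0 : f 0 = c j := by simp [f]
  have hfv : f v = c i := by simp [f, v]
  have hfn : f (n + 1) = c j := by simp [f]
  have htotal : ∑ s ∈ range (n + 1), (f s - f (s + 1)) ^ 2 = ∑ k, (c k - c (k + 1)) ^ 2 := by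
    rw [← ZMod.sum_range_add _ j]
    simp [f, add_assoc]
  rw [← htotal, range_eq_Ico, ← sum_Ico_consecutive _ (Nat.zero_le v) hv, two_mul]
  have h1 := abs_sub_le_sum_Ico_sq f (Nat.zero_le v)
  have h2 := abs_sub_le_sum_Ico_sq f hv
  rw [hf0, hfv, abs_sub_comm] at h1
  rw [hfv, hfn] at h2
  linarith

lemma ZMod.natCast_ne_zero_of_pos_of_lt {m k : ℕ} (hk : 0 < k) (hkm : k < m) :
    (k : ZMod m) ≠ 0 := by
  rw [Ne, ZMod.natCast_eq_zero_iff]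
  exact Nat.not_dvd_of_pos_of_lt hk hkm

namespace KMD

open scoped Classical
open Matrix

variable {I : Type} [Fintype I] [DecidableEq I] (S : KMD I)

def ofCoeff : (I → ℤ) →ₗ[ℤ] S.X := Fintype.linearCombination ℤ S.α

lemma ofCoeff_apply (c : I → ℤ) : S.ofCoeff c = ∑ i, c i • S.α i := rfl

lemma ofCoeff_injective : Function.Injective S.ofCoeff :=
  S.indep_α.fintypeLinearCombination_injective

lemma ofCoeff_single (i : I) : S.ofCoeff (Pi.single i 1) = S.α i := by
  simp [ofCoeff]

def cartan : Matrix I I ℤ := Matrix.of S.A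

lemma pairing_ofCoeff (i : I) (c : I → ℤ) : S.P (S.αv i) (S.ofCoeff c) = (S.cartan *ᵥ c) i := by
  simp [ofCoeff_apply, cartan, mulVec, dotProduct, S.pair_simple, mul_comm]

lemma pairing_self (i : I) : S.P (S.αv i) (S.α i) = 2 := by
  rw [S.pair_simple, S.A_diag]

lemma reflX_apply (i : I) (x : S.X) : S.reflX i x = x - S.P (S.αv i) x • S.α i :=
  S.preReflX_apply i x

lemma reflY_apply (i : I) (y : S.Y) : S.reflY i y = y - S.P y (S.α i) • S.αv i :=
  S.preReflY_apply i y

lemma pairing_reflY_reflX (i : I) (y : S.Y) (x : S.X) :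
    S.P (S.reflY i y) (S.reflX i x) = S.P y x := by
  simp only [reflX_apply, reflY_apply, map_sub, map_smul, LinearMap.sub_apply,
    LinearMap.smul_apply, smul_eq_mul, pairing_self]
  ring

lemma reflX_α (i : I) : S.reflX i (S.α i) = -S.α i := by
  rw [reflX_apply, pairing_self]
  module

lemma reflX_eq_self {x : S.X} (i : I) (hx : S.P (S.αv i) x = 0) : S.reflX i x = x := by
  rw [reflX_apply, hx, zero_smul, sub_zero]

def reflCoeff (i : I) (c : I → ℤ) : I → ℤ := c - (S.cartan *ᵥ c) i • Pi.single i 1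

lemma reflX_ofCoeff (i : I) (c : I → ℤ) :
    S.reflX i (S.ofCoeff c) = S.ofCoeff (S.reflCoeff i c) := by
  rw [reflX_apply, reflCoeff, map_sub, map_smul, ofCoeff_single, pairing_ofCoeff]

lemma wordX_cons (i : I) (l : List I) (x : S.X) :
    S.wordX (i :: l) x = S.reflX i (S.wordX l x) := rfl

lemma wordY_cons (i : I) (l : List I) (y : S.Y) :
    S.wordY (i :: l) y = S.reflY i (S.wordY l y) := rfl

lemma wordX_append (l₁ l₂ : List I) (x : S.X) :
    S.wordX (l₁ ++ l₂) x = S.wordX l₁ (S.wordX l₂ x) := by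
  simp [wordX, List.prod_append]

lemma wordX_reverse (l : List I) (x : S.X) : S.wordX l (S.wordX l.reverse x) = x := by
  induction l generalizing x with
  | nil => rfl
  | cons i l ih =>
    rw [List.reverse_cons, wordX_append, wordX_cons, ih]
    exact S.preReflX_invol i x

lemma wordX_ofCoeff (l : List I) (c : I → ℤ) :
    S.wordX l (S.ofCoeff c) = S.ofCoeff (l.foldr S.reflCoeff c) := by
  induction l with
  | nil => rfl
  | cons i l ih => rw [wordX_cons, ih, reflX_ofCoeff, List.foldr_cons]

lemma wordX_eq_self {x : S.X} (hx : ∀ i, S.P (S.αv i) x = 0) (l : List I) : S.wordX l x = x := by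
  induction l with
  | nil => rfl
  | cons i l ih => rw [wordX_cons, ih, S.reflX_eq_self i (hx i)]

lemma pairing_wordY_wordX (l : List I) (y : S.Y) (x : S.X) :
    S.P (S.wordY l y) (S.wordX l x) = S.P y x := by
  induction l generalizing x y with
  | nil => rfl
  | cons i l ih => rw [wordX_cons, wordY_cons, pairing_reflY_reflX, ih]

/-- The form `(α_i, α_j) = a_ij` on root-lattice coordinates. -/
def form (c d : I → ℤ) : ℤ := c ⬝ᵥ (S.cartan *ᵥ d)

variable {S}

lemma form_symm (hA : S.cartan.IsSymm) (c d : I → ℤ) : S.form c d = S.form d c := by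
  rw [form, form, dotProduct_mulVec, dotProduct_comm]
  conv_lhs => rw [← hA, vecMul_transpose]

lemma form_single (i : I) (d : I → ℤ) : S.form (Pi.single i 1) d = (S.cartan *ᵥ d) i :=
  single_one_dotProduct i _

lemma form_reflCoeff (hA : S.cartan.IsSymm) (i : I) (c d : I → ℤ) :
    S.form (S.reflCoeff i c) (S.reflCoeff i d) = S.form c d := by
  have hci : S.form c (Pi.single i 1) = (S.cartan *ᵥ c) i := by
    rw [form_symm hA, form_single]
  have hii : S.form (Pi.single i 1) (Pi.single i 1) = 2 := by
    rw [form_single, ← pairing_ofCoeff, ofCoeff_single, pairing_self]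
  simp only [reflCoeff, form, mulVec_sub, mulVec_smul, sub_dotProduct, dotProduct_sub,
    smul_dotProduct, dotProduct_smul, smul_eq_mul] at hci hii ⊢
  rw [hci, hii, single_one_dotProduct]
  ring

lemma form_foldr_reflCoeff (hA : S.cartan.IsSymm) (l : List I) (c d : I → ℤ) :
    S.form (l.foldr S.reflCoeff c) (l.foldr S.reflCoeff d) = S.form c d := by
  induction l with
  | nil => rfl
  | cons i l ih => rw [List.foldr_cons, List.foldr_cons, form_reflCoeff hA, ih]

lemma IsRoot.wordX {x : S.X} (h : S.IsRoot x) (l : List I) : S.IsRoot (S.wordX l x) := by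
  obtain ⟨⟨l', i⟩, rfl⟩ := h
  exact ⟨⟨l ++ l', i⟩, (S.wordX_append l l' _).symm⟩

lemma IsRoot.neg {x : S.X} (h : S.IsRoot x) : S.IsRoot (-x) := by
  obtain ⟨⟨l, i⟩, rfl⟩ := h
  refine ⟨⟨l ++ [i], i⟩, ?_⟩
  rw [wordX_append, ← map_neg, ← S.reflX_α]
  rfl

lemma IsRoot.ne_zero {x : S.X} (h : S.IsRoot x) : x ≠ 0 := by
  obtain ⟨⟨l, i⟩, rfl⟩ := h
  intro h0
  apply S.indep_α.ne_zero i
  rw [← S.wordX_reverse l.reverse (S.α i), List.reverse_reverse, h0, map_zero]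

lemma isPosRoot_ofCoeff {c : I → ℤ} (h : S.IsRoot (S.ofCoeff c)) (hc : 0 ≤ c) :
    S.IsPosRoot (S.ofCoeff c) :=
  ⟨h, fun i => (c i).toNat, by simp only [Int.toNat_of_nonneg (hc _)]; rfl⟩

lemma isNegRoot_neg_ofCoeff {c : I → ℤ} (h : S.IsRoot (-S.ofCoeff c)) (hc : 0 ≤ c) :
    S.IsNegRoot (-S.ofCoeff c) :=
  ⟨h, fun i => (c i).toNat, by simp only [Int.toNat_of_nonneg (hc _)]; rfl⟩

lemma IsPosRoot.exists_nonneg {x : S.X} (h : S.IsPosRoot x) : ∃ c, 0 ≤ c ∧ x = S.ofCoeff c := by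
  obtain ⟨-, c, rfl⟩ := h
  exact ⟨fun i => c i, fun i => Int.natCast_nonneg _, rfl⟩

lemma IsNegRoot.exists_nonneg {x : S.X} (h : S.IsNegRoot x) :
    ∃ c, 0 ≤ c ∧ x = -S.ofCoeff c := by
  obtain ⟨-, c, rfl⟩ := h
  exact ⟨fun i => c i, fun i => Int.natCast_nonneg _, rfl⟩

lemma wordX_symm_apply (l : List I) (z : S.X) : (S.wordX l).symm z = S.wordX l.reverse z :=
  (S.wordX l).symm_apply_eq.mpr (S.wordX_reverse l z).symm

lemma IsRoot.exists_word {x : S.X} (h : S.IsRoot x) : ∃ (l : List I) (i : I),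
    x = S.wordX l (S.α i) ∧ S.coroot x = S.wordY l (S.αv i) ∧
      ∀ z, S.sReflX x z = S.wordX l (S.reflX i (S.wordX l.reverse z)) := by
  refine ⟨h.choose.1, h.choose.2, h.choose_spec, by rw [coroot, dif_pos h], fun z => ?_⟩
  rw [sReflX, dif_pos h, ← wordX_symm_apply]
  rfl

lemma pairing_coroot_wordX {x : S.X} {l : List I} {i : I} (hx : S.coroot x = S.wordY l (S.αv i))
    (z : S.X) : S.P (S.coroot x) z = S.P (S.αv i) (S.wordX l.reverse z) := by
  rw [hx, ← S.pairing_wordY_wordX l (S.αv i), wordX_reverse]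

lemma sReflX_apply {x : S.X} (h : S.IsRoot x) (z : S.X) :
    S.sReflX x z = z - S.P (S.coroot x) z • x := by
  obtain ⟨l, i, hx, hcx, hs⟩ := h.exists_word
  rw [hs, reflX_apply, map_sub, map_smul, wordX_reverse, ← hx, pairing_coroot_wordX hcx]

lemma IsRoot.sReflX {x z : S.X} (hx : S.IsRoot x) (hz : S.IsRoot z) : S.IsRoot (S.sReflX x z) := by
  obtain ⟨l, i, -, -, hs⟩ := hx.exists_word
  rw [hs, ← wordX_cons, ← wordX_append]
  exact hz.wordX _

lemma pairing_coroot_self {x : S.X} (h : S.IsRoot x) : S.P (S.coroot x) x = 2 := by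
  obtain ⟨l, i, hx, hcx, -⟩ := h.exists_word
  rw [hcx, hx, pairing_wordY_wordX, pairing_self]

lemma pairing_coroot_ofCoeff (hA : S.cartan.IsSymm) {b : I → ℤ} (h : S.IsRoot (S.ofCoeff b))
    (g : I → ℤ) : S.P (S.coroot (S.ofCoeff b)) (S.ofCoeff g) = S.form b g := by
  obtain ⟨l, i, hx, hcx, -⟩ := h.exists_word
  have hb : l.foldr S.reflCoeff (Pi.single i 1) = b := by
    apply S.ofCoeff_injective
    rw [← wordX_ofCoeff, ofCoeff_single, hx]
  have hg : l.foldr S.reflCoeff (l.reverse.foldr S.reflCoeff g) = g := by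
    apply S.ofCoeff_injective
    rw [← wordX_ofCoeff, ← wordX_ofCoeff, wordX_reverse]
  rw [pairing_coroot_wordX hcx, wordX_ofCoeff, pairing_ofCoeff, ← form_single,
    ← form_foldr_reflCoeff hA l, hb, hg]

lemma IsRoot.form_self_eq_two (hA : S.cartan.IsSymm) {b : I → ℤ} (h : S.IsRoot (S.ofCoeff b)) :
    S.form b b = 2 := by
  rw [← pairing_coroot_ofCoeff hA h, pairing_coroot_self h]

lemma form_sub_self_of_isRoot (hA : S.cartan.IsSymm) {c d : I → ℤ} (hc : S.IsRoot (S.ofCoeff c))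
    (hd : S.IsRoot (S.ofCoeff d)) : S.form (c - d) (c - d) = 4 - 2 * S.form c d := by
  have hdc : S.form d c = S.form c d := form_symm hA d c
  have hcc := hc.form_self_eq_two hA
  have hdd := hd.form_self_eq_two hA
  simp only [form, mulVec_sub, dotProduct_sub, sub_dotProduct] at hdc hcc hdd ⊢
  linarith

lemma coeff_le_pairing_mul_of_mem_invSet {c d : I → ℤ} (hc : S.IsRoot (S.ofCoeff c))
    (hd : S.ofCoeff d ∈ S.InvSet (S.sReflX (S.ofCoeff c))) (j : I) :
    d j ≤ S.P (S.coroot (S.ofCoeff c)) (S.ofCoeff d) * c j := by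
  obtain ⟨e, he, hrefl⟩ := hd.2.exists_nonneg
  rw [sReflX_apply hc, ← map_smul, ← map_sub, ← map_neg] at hrefl
  have hj := congrFun (S.ofCoeff_injective hrefl) j
  have hej := he j
  simp only [Pi.sub_apply, Pi.smul_apply, Pi.neg_apply, Pi.zero_apply, smul_eq_mul] at hj hej
  linarith

lemma one_le_pairing_coroot_of_mem_invSet {β γ : S.X} (hβ : S.IsPosRoot β)
    (hγ : γ ∈ S.InvSet (S.sReflX β)) : 1 ≤ S.P (S.coroot β) γ := by
  obtain ⟨c, hc, rfl⟩ := hβ.exists_nonneg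
  obtain ⟨d, hd, rfl⟩ := hγ.1.exists_nonneg
  by_contra! hp
  apply hγ.1.1.ne_zero
  convert map_zero S.ofCoeff
  ext j
  have hle := coeff_le_pairing_mul_of_mem_invSet hβ.1 hγ j
  have hcj := hc j
  have hdj := hd j
  simp only [Pi.zero_apply] at hcj hdj ⊢
  nlinarith

section AffineA

variable {n : ℕ} {S : KMD (ZMod (n + 1))}

lemma cartan_mulVec_apply_of_cycle (hn : 2 ≤ n) (h1 : ∀ i : ZMod (n + 1), S.A i (i + 1) = -1)
    (h2 : ∀ i : ZMod (n + 1), S.A i (i - 1) = -1)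
    (h0 : ∀ i j : ZMod (n + 1), j ≠ i → j ≠ i + 1 → j ≠ i - 1 → S.A i j = 0)
    (c : ZMod (n + 1) → ℤ) (i : ZMod (n + 1)) :
    (S.cartan *ᵥ c) i = 2 * c i - c (i + 1) - c (i - 1) := by
  have h1ne : (1 : ZMod (n + 1)) ≠ 0 := by
    exact_mod_cast ZMod.natCast_ne_zero_of_pos_of_lt (m := n + 1) one_pos (by omega)
  have h2ne : (2 : ZMod (n + 1)) ≠ 0 := by
    exact_mod_cast ZMod.natCast_ne_zero_of_pos_of_lt (m := n + 1) two_pos (by omega)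
  have hs : i + 1 ≠ i := fun h => h1ne (by linear_combination h)
  have hp : i - 1 ≠ i := fun h => h1ne (by linear_combination -h)
  have hsp : i + 1 ≠ i - 1 := fun h => h2ne (by linear_combination h)
  rw [mulVec, dotProduct, ← Finset.sum_subset (Finset.subset_univ {i, i + 1, i - 1})]
  · rw [Finset.sum_insert (by simp [hs.symm, hp.symm]), Finset.sum_pair hsp]
    simp only [cartan, Matrix.of_apply, S.A_diag, h1, h2]
    ring
  · intro j _ hj
    simp only [Finset.mem_insert, Finset.mem_singleton, not_or] at hj
    simp [cartan, h0 i j hj.1 hj.2.1 hj.2.2]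

def arc (j : ZMod (n + 1)) (t : ℕ) : ZMod (n + 1) → ℤ :=
  ∑ s ∈ Finset.range (t + 1), Pi.single (j + s) 1

lemma arc_zero (j : ZMod (n + 1)) : arc j 0 = Pi.single j 1 := by
  simp [arc]

lemma arc_succ (j : ZMod (n + 1)) (t : ℕ) : arc j (t + 1) = arc (j + 1) t + Pi.single j 1 := by
  rw [arc, Finset.sum_range_succ', Nat.cast_zero, add_zero, arc]
  congr! 3 with s
  push_cast
  ring

lemma arc_apply_add (j : ZMod (n + 1)) {t m : ℕ} (ht : t ≤ n) (hm : m ≤ n) :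
    arc j t (j + m) = if m ≤ t then 1 else 0 := by
  have hcast (s : ℕ) (hs : s ≤ n) : (j + m = j + s) ↔ m = s := by
    rw [add_right_inj, ZMod.natCast_eq_natCast_iff', Nat.mod_eq_of_lt (by omega),
      Nat.mod_eq_of_lt (by omega)]
  simp only [arc, Finset.sum_apply, Pi.single_apply]
  rw [Finset.sum_congr rfl fun s hs => by
    rw [if_congr (hcast s (by simp at hs; omega)) rfl rfl]]
  simp

lemma arc_pred_add_single (hn : 0 < n) (i : ZMod (n + 1)) :
    arc (i + 1) (n - 1) + Pi.single i 1 = 1 := by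
  have hfull : arc (i + 1) n = 1 := by
    rw [arc, ZMod.sum_range_add (fun k => Pi.single k (1 : ℤ)), Finset.univ_sum_single]
    rfl
  obtain ⟨m, rfl⟩ : ∃ m, n = m + 1 := ⟨n - 1, by omega⟩
  rw [← hfull, Nat.add_sub_cancel, arc, arc, Finset.sum_range_succ (n := m + 1)]
  congr 2
  rw [eq_neg_of_add_eq_zero_left (ZMod.natCast_self' _)]
  ring

variable (hS : ∀ (c : ZMod (n + 1) → ℤ) i, (S.cartan *ᵥ c) i = 2 * c i - c (i + 1) - c (i - 1))
include hS

lemma cartan_isSymm_of_cycle : S.cartan.IsSymm := by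
  ext i j
  have hij := hS (Pi.single i 1) j
  have hji := hS (Pi.single j 1) i
  simp only [mulVec_single_one, col_apply] at hij hji
  rw [transpose_apply, hij, hji]
  have hsucc : j + 1 = i ↔ i - 1 = j := by constructor <;> rintro rfl <;> ring
  have hpred : j - 1 = i ↔ i + 1 = j := by constructor <;> rintro rfl <;> ring
  simp only [Pi.single_apply, hsucc, hpred, eq_comm (a := j)]
  ring

lemma form_self_eq_sum_sq (c : ZMod (n + 1) → ℤ) :
    S.form c c = ∑ i, (c i - c (i + 1)) ^ 2 := by
  have htelescope (g : ZMod (n + 1) → ℤ) : ∑ i, (g i - g (i + 1)) = 0 := by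
    rw [Finset.sum_sub_distrib, sub_eq_zero]
    exact (Equiv.sum_comp (Equiv.addRight (1 : ZMod (n + 1))) g).symm
  calc S.form c c = ∑ i, c i * (S.cartan *ᵥ c) i := rfl
    _ = ∑ i, ((c i - c (i + 1)) ^ 2 + (c i ^ 2 - c (i + 1) ^ 2)
        - (c (i - 1) * c i - c (i + 1 - 1) * c (i + 1))) := by
        refine Finset.sum_congr rfl fun i _ => ?_
        rw [hS, add_sub_cancel_right]
        ring
    _ = ∑ i, (c i - c (i + 1)) ^ 2 := by
        rw [Finset.sum_sub_distrib, Finset.sum_add_distrib, htelescope (c · ^ 2),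
          htelescope fun i => c (i - 1) * c i]
        ring

lemma cartan_mulVec_one : S.cartan *ᵥ 1 = 0 := by
  ext i
  simp [hS]

lemma form_one_right (c : ZMod (n + 1) → ℤ) : S.form c 1 = 0 := by
  rw [form, cartan_mulVec_one hS, dotProduct_zero]

lemma two_mul_abs_sub_le_form_self (c : ZMod (n + 1) → ℤ) (i j : ZMod (n + 1)) :
    2 * |c i - c j| ≤ S.form c c :=
  form_self_eq_sum_sq hS c ▸ ZMod.two_mul_abs_sub_le_sum_sq c i j

lemma form_self_nonneg (c : ZMod (n + 1) → ℤ) : 0 ≤ S.form c c := by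
  simpa using two_mul_abs_sub_le_form_self hS c 0 0

lemma eq_of_form_self_eq_zero {c : ZMod (n + 1) → ℤ} (hc : S.form c c = 0) (i j : ZMod (n + 1)) :
    c i = c j := by
  have h := two_mul_abs_sub_le_form_self hS c i j
  rw [hc] at h
  exact sub_eq_zero.mp (abs_eq_zero.mp (le_antisymm (by linarith) (abs_nonneg _)))

lemma IsRoot.abs_sub_coeff_le_one {b : ZMod (n + 1) → ℤ} (h : S.IsRoot (S.ofCoeff b))
    (i j : ZMod (n + 1)) : |b i - b j| ≤ 1 := by
  have := two_mul_abs_sub_le_form_self hS b i j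
  rw [h.form_self_eq_two (cartan_isSymm_of_cycle hS)] at this
  linarith

lemma form_le_two_of_isRoot {c d : ZMod (n + 1) → ℤ} (hc : S.IsRoot (S.ofCoeff c))
    (hd : S.IsRoot (S.ofCoeff d)) : S.form c d ≤ 2 := by
  have := form_self_nonneg hS (c - d)
  rw [form_sub_self_of_isRoot (cartan_isSymm_of_cycle hS) hc hd] at this
  linarith

lemma not_isRoot_ofCoeff_one : ¬S.IsRoot (S.ofCoeff 1) := fun h => by
  have := h.form_self_eq_two (cartan_isSymm_of_cycle hS)
  rw [form_one_right hS] at this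
  exact absurd this (by norm_num)

lemma cartan_mulVec_arc_apply (j : ZMod (n + 1)) {t : ℕ} (ht : t + 2 ≤ n) :
    (S.cartan *ᵥ arc (j + 1) t) j = -1 := by
  have hstart : arc (j + 1) t (j + 1) = 1 := by
    simpa using arc_apply_add (j + 1) (m := 0) (by omega : t ≤ n) (Nat.zero_le n)
  have hprev : arc (j + 1) t j = 0 := by
    have := arc_apply_add (j + 1) (m := n) (by omega : t ≤ n) le_rfl
    rwa [eq_neg_of_add_eq_zero_left (ZMod.natCast_self' n), if_neg (by omega), ← sub_eq_add_neg,
      add_sub_cancel_right] at this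
  have hprev' : arc (j + 1) t (j - 1) = 0 := by
    have := arc_apply_add (j + 1) (m := n - 1) (by omega : t ≤ n) (Nat.sub_le n 1)
    rwa [Nat.cast_sub (by omega), eq_neg_of_add_eq_zero_left (ZMod.natCast_self' n),
      if_neg (by omega),
      show j + 1 + (-1 - ((1 : ℕ) : ZMod (n + 1))) = j - 1 by push_cast; ring] at this
  rw [hS, hstart, hprev, hprev']
  norm_num

lemma isRoot_ofCoeff_arc {t : ℕ} (ht : t < n) (j : ZMod (n + 1)) :
    S.IsRoot (S.ofCoeff (arc j t)) := by
  induction t generalizing j with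
  | zero => exact ⟨⟨[], j⟩, by rw [arc_zero, ofCoeff_single]; rfl⟩
  | succ t ih =>
    have hrefl : S.reflCoeff j (arc (j + 1) t) = arc j (t + 1) := by
      rw [reflCoeff, cartan_mulVec_arc_apply hS j (by omega), arc_succ]
      simp
    rw [← hrefl, ← reflX_ofCoeff]
    exact (ih (by omega) (j + 1)).wordX [j]

lemma IsRoot.sub_ofCoeff_one (hn : 0 < n) {x : S.X} (h : S.IsRoot x) :
    S.IsRoot (x - S.ofCoeff 1) := by
  obtain ⟨⟨l, i⟩, rfl⟩ := h
  have hfix : S.wordX l (S.ofCoeff 1) = S.ofCoeff 1 :=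
    S.wordX_eq_self (fun k => by rw [pairing_ofCoeff, cartan_mulVec_one hS]; rfl) l
  have hcompl : S.α i - S.ofCoeff 1 = -S.ofCoeff (arc (i + 1) (n - 1)) := by
    rw [← arc_pred_add_single hn i, map_add, ofCoeff_single]
    abel
  rw [← hfix, ← map_sub, hcompl]
  exact (isRoot_ofCoeff_arc hS (by omega) _).neg.wordX l

lemma coeff_le_one_of_isQuantum (hn : 0 < n) {b : ZMod (n + 1) → ℤ} (hb : 0 ≤ b)
    (hq : S.IsQuantum (S.ofCoeff b)) (i : ZMod (n + 1)) : b i ≤ 1 := by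
  obtain ⟨⟨hroot, -⟩, hquant⟩ := hq
  have hA := cartan_isSymm_of_cycle hS
  by_contra! hi
  have hb1 : 1 ≤ b := fun j => show 1 ≤ b j by
    have := (abs_le.mp (hroot.abs_sub_coeff_le_one hS i j)).2
    omega
  have hγ : S.IsPosRoot (S.ofCoeff (b - 1)) :=
    isPosRoot_ofCoeff (by rw [map_sub]; exact hroot.sub_ofCoeff_one hS hn) (sub_nonneg.mpr hb1)
  have hpair : S.P (S.coroot (S.ofCoeff b)) (S.ofCoeff (b - 1)) = 2 := by
    have := form_one_right hS b
    rw [pairing_coroot_ofCoeff hA hroot, ← hroot.form_self_eq_two hA]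
    simp only [form, mulVec_sub, dotProduct_sub] at this ⊢
    linarith
  have hrefl : S.sReflX (S.ofCoeff b) (S.ofCoeff (b - 1)) = -S.ofCoeff (b + 1) := by
    rw [sReflX_apply hroot, hpair, ← map_smul, ← map_sub, ← map_neg]
    congr 1
    ext j
    simp only [Pi.sub_apply, Pi.smul_apply, Pi.neg_apply, Pi.add_apply, Pi.one_apply, smul_eq_mul]
    ring
  have hneg : S.IsNegRoot (S.sReflX (S.ofCoeff b) (S.ofCoeff (b - 1))) := by
    rw [hrefl]
    refine isNegRoot_neg_ofCoeff (hrefl ▸ hroot.sReflX hγ.1) fun j => ?_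
    have := hb j
    simp only [Pi.add_apply, Pi.one_apply, Pi.zero_apply] at this ⊢
    omega
  have hne : S.ofCoeff (b - 1) ≠ S.ofCoeff b := S.ofCoeff_injective.ne fun h => by
    simpa using congrFun h i
  have := hquant _ ⟨hγ, hneg⟩ hne
  rw [hpair] at this
  norm_num at this

lemma isQuantum_of_coeff_zero_or_one {c : ZMod (n + 1) → ℤ} (hβ : S.IsPosRoot (S.ofCoeff c))
    (hc : ∀ i, c i = 0 ∨ c i = 1) : S.IsQuantum (S.ofCoeff c) := by
  have hA := cartan_isSymm_of_cycle hS
  refine ⟨hβ, fun γ hγ hne => ?_⟩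
  obtain ⟨d, hd, rfl⟩ := hγ.1.exists_nonneg
  have hp1 := one_le_pairing_coroot_of_mem_invSet hβ hγ
  have hle := coeff_le_pairing_mul_of_mem_invSet hβ.1 hγ
  rw [pairing_coroot_ofCoeff hA hβ.1] at hp1 hle ⊢
  have hp2 := form_le_two_of_isRoot hS hβ.1 hγ.1.1
  obtain hp | hp : S.form c d = 1 ∨ S.form c d = 2 := by omega
  · exact hp
  have hconst : ∀ i j, (c - d) i = (c - d) j := eq_of_form_self_eq_zero hS <| by
    rw [form_sub_self_of_isRoot hA hβ.1 hγ.1.1, hp]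
    norm_num
  obtain ⟨j₀, hj₀⟩ : ∃ j, c j = 0 := by
    by_contra! hc0
    have hc1 : c = 1 := funext fun j => (hc j).resolve_left (hc0 j)
    exact not_isRoot_ofCoeff_one hS (hc1 ▸ hβ.1)
  have hdj₀ : d j₀ = 0 := by
    have := hle j₀
    have := hd j₀
    simp only [hj₀, Pi.zero_apply, mul_zero] at *
    omega
  refine absurd (congrArg S.ofCoeff (funext fun i => ?_)).symm hne
  have := hconst i j₀
  simp only [Pi.sub_apply, hj₀, hdj₀] at this
  omega

end AffineA

end KMD

namespace KMD

open scoped Classical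

variable {I : Type} [Fintype I] [DecidableEq I]

/-- In affine type `A_n^{(1)}` (`n ≥ 2`), with simple roots indexed cyclically by
`ℤ/(n+1)ℤ`, the quantum roots are exactly the positive real roots all of whose
simple-root coefficients lie in `{0, 1}` (sums of simple roots over arcs of the cycle). -/
theorem quantum_roots_affine_A (n : ℕ) (hn : 2 ≤ n) (S : KMD (ZMod (n + 1)))
    (h1 : ∀ i : ZMod (n + 1), S.A i (i + 1) = -1)
    (h2 : ∀ i : ZMod (n + 1), S.A i (i - 1) = -1)
    (h0 : ∀ i j : ZMod (n + 1), j ≠ i → j ≠ i + 1 → j ≠ i - 1 → S.A i j = 0) :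
    ∀ β : S.X, S.IsQuantum β ↔
      (S.IsPosRoot β ∧ ∃ c : ZMod (n + 1) → ℤ, (∀ i, c i = 0 ∨ c i = 1) ∧
        β = ∑ i, c i • S.α i) := by
  have hS := cartan_mulVec_apply_of_cycle hn h1 h2 h0
  intro β
  constructor
  · intro hq
    obtain ⟨b, hb, rfl⟩ := hq.1.exists_nonneg
    refine ⟨hq.1, b, fun i => ?_, rfl⟩
    have hnonneg : 0 ≤ b i := hb i
    have hle := coeff_le_one_of_isQuantum hS (by omega) hb hq i
    omega
  · rintro ⟨hβ, c, hc, rfl⟩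
    exact isQuantum_of_coeff_zero_or_one hS hβ hc

end KMD
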